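/- arXiv:2304.06435 — 5 statements merged into one kernel-verified Lean document; each statement's English description precedes it below -/
import Mathlib

section
/- Let n, k ≥ 1 and let a, b ≥ 0 with a + b = nk. Let π be a partition of {1, …, nk} into k blocks each of cardinality n, and for 0 ≤ i ≤ n let m_i be the number of blocks B of π with |B ∩ {1, …, a}| = i. Then the stabilizer of π inside the Young subgroup S_a × S_b of S_{nk} (the permutations preserving {1, …, a} that map every block of π onto a block of π) is isomorphic to the direct product ∏_{i=0}^n ((S_i × S_{n−i}) ≀ S_{m_i}) of wreath products. -/
/-- The action of `Equiv.Perm (Fin m)` on `Fin m → G` by permuting the coordinates. -/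
def permuteCoordsAct (G : Type*) [Group G] (m : ℕ) :
    Equiv.Perm (Fin m) →* MulAut (Fin m → G) where
  toFun σ :=
    { toEquiv := Equiv.arrowCongr σ (Equiv.refl G)
      map_mul' := fun f g => rfl }
  map_one' := by ext f i; rfl
  map_mul' := fun σ τ => by ext f i; rfl

/-- The wreath product `G ≀ S_m`, i.e. the semidirect product
`(Fin m → G) ⋊ Perm (Fin m)` where `Perm (Fin m)` permutes the coordinates. -/
def WreathProduct (G : Type*) [Group G] (m : ℕ) : Type _ :=
  SemidirectProduct (Fin m → G) (Equiv.Perm (Fin m)) (permuteCoordsAct G m)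

noncomputable instance (G : Type*) [Group G] (m : ℕ) : Group (WreathProduct G m) :=
  inferInstanceAs (Group (SemidirectProduct _ _ _))

/-!
Label every point `x < a` as "left". Enumerate, for each `i`, the `m_i` parts of `π` with exactly
`i` left points, and identify each of them with `Fin i ⊕ Fin (n - i)` so that left points go left.
This identifies `Fin (n * k)` with `Σ i, Fin m_i × (Fin i ⊕ Fin (n - i))`, on which
`∏ i, (S_i × S_{n-i}) ≀ S_{m_i}` acts faithfully: `S_{m_i}` permutes the parts with `i` left
points and `S_i × S_{n-i}` acts inside a part, preserving sides. Conversely, a permutation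
preserving the left points and the parts maps a part to a part with the same number of left
points, and restricts to a side-preserving bijection between them: it lies in the image.
-/

open Finset Equiv

namespace WreathProduct

variable {G X : Type*} [Group G] (α : G →* Perm X) (m : ℕ)

/-- The imprimitive action of `G ≀ S_m` on `m` copies of `X`. -/
def toPerm : WreathProduct G m →* Perm (Fin m × X) :=
  SemidirectProduct.lift
    { toFun := fun f => prodShear (Equiv.refl _) fun j => α (f j)
      map_one' := by ext ⟨j, z⟩ <;> simp [prodShear]
      map_mul' := fun f g => by ext ⟨j, z⟩ <;> simp [prodShear] }
    { toFun := fun σ => prodCongr σ (Equiv.refl X)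
      map_one' := by ext ⟨j, z⟩ <;> simp
      map_mul' := fun σ τ => by ext ⟨j, z⟩ <;> simp }
    (fun σ => by
      ext f ⟨j, z⟩ <;>
        simp [prodShear, MulAut.conj_apply, permuteCoordsAct, Perm.inv_def, prodCongr_symm]
      rfl)

theorem toPerm_apply (w : WreathProduct G m) (j : Fin m) (z : X) :
    toPerm α m w (j, z) = (w.right j, α (w.left (w.right j)) z) :=
  rfl

theorem toPerm_injective (hα : Function.Injective α) [Nonempty X] :
    Function.Injective (toPerm α m) := by
  rw [injective_iff_map_eq_one]
  intro w hw
  have hw' (j : Fin m) (z : X) : (w.right j, α (w.left (w.right j)) z) = (j, z) := by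
    rw [← toPerm_apply, hw, Perm.one_apply]
  have hright : w.right = 1 :=
    Equiv.ext fun j => congrArg Prod.fst (hw' j (Classical.arbitrary X))
  have hleft : w.left = 1 := funext fun j => hα <| Equiv.ext fun z => by
    simpa [hright] using congrArg Prod.snd (hw' j z)
  exact SemidirectProduct.ext hleft hright

end WreathProduct

section SigmaWreath

variable {ι : Type*} {G X : ι → Type*} [∀ i, Group (G i)] (α : ∀ i, G i →* Perm (X i))
  (m : ι → ℕ)

noncomputable def sigmaWreathToPerm :
    (Π i, WreathProduct (G i) (m i)) →* Perm (Σ i, Fin (m i) × X i) :=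
  (Perm.sigmaCongrRightHom _).comp
    (MonoidHom.pi fun i => (WreathProduct.toPerm (α i) (m i)).comp (Pi.evalMonoidHom _ i))

theorem sigmaWreathToPerm_apply (w : Π i, WreathProduct (G i) (m i)) (i : ι) (j : Fin (m i))
    (z : X i) :
    sigmaWreathToPerm α m w ⟨i, j, z⟩ =
      ⟨i, (w i).right j, α i ((w i).left ((w i).right j)) z⟩ :=
  rfl

theorem sigmaWreathToPerm_injective (hα : ∀ i, Function.Injective (α i))
    [∀ i, Nonempty (X i)] : Function.Injective (sigmaWreathToPerm α m) :=
  Perm.sigmaCongrRightHom_injective.comp fun _ _ h =>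
    funext fun i => WreathProduct.toPerm_injective (α i) (m i) (hα i) (congrFun h i)

theorem exists_sigmaWreathToPerm_eq [∀ i, Nonempty (X i)] (τ : Perm (Σ i, Fin (m i) × X i))
    (hτ : ∀ i j, ∃ j' g, ∀ z, τ ⟨i, j, z⟩ = ⟨i, j', α i g z⟩) :
    ∃ w, sigmaWreathToPerm α m w = τ := by
  choose ρ g hτ using hτ
  have hρ (i : ι) : Function.Injective (ρ i) := by
    intro j₁ j₂ h
    let z : X i := Classical.arbitrary _
    have : τ ⟨i, j₁, z⟩ = τ ⟨i, j₂, (α i (g i j₂)).symm (α i (g i j₁) z)⟩ := by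
      rw [hτ, hτ, h, apply_symm_apply]
    have := τ.injective this
    simp only [Sigma.mk.injEq, heq_eq_eq, Prod.mk.injEq, true_and] at this
    exact this.1
  let ρ' (i : ι) : Perm (Fin (m i)) := ofBijective _ (Finite.injective_iff_bijective.mp (hρ i))
  let w : Π i, WreathProduct (G i) (m i) := fun i => ⟨fun j => g i ((ρ' i).symm j), ρ' i⟩
  refine ⟨w, Equiv.ext fun ⟨i, j, z⟩ => ?_⟩
  rw [sigmaWreathToPerm_apply, hτ]
  simp [w, ρ']

end SigmaWreath

theorem Equiv.Perm.exists_sumCongrHom_eq {A B : Type*} [Finite A] [Finite B]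
    {f : A ⊕ B → A ⊕ B} (hf : Function.Injective f) (hleft : ∀ z, (f z).isLeft = z.isLeft) :
    ∃ g, ⇑(sumCongrHom A B g) = f := by
  obtain ⟨g, hg⟩ := mem_sumCongrHom_range_of_perm_mapsTo_inl
    (σ := ofBijective f (Finite.injective_iff_bijective.mp hf)) (by
      rintro _ ⟨a, rfl⟩
      obtain ⟨b, hb⟩ := Sum.isLeft_iff.mp ((hleft (.inl a)).trans rfl)
      exact ⟨b, hb.symm⟩)
  exact ⟨g, congrArg DFunLike.coe hg⟩

theorem nonempty_fin_sum_fin_sub {n : ℕ} (hn : 1 ≤ n) (i : Fin (n + 1)) :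
    Nonempty (Fin i ⊕ Fin (n - i)) :=
  ⟨finSumFinEquiv.symm ⟨0, by omega⟩⟩

section BlockModel

variable {T : Type*} (p : T → Prop) [DecidablePred p]

theorem Finset.card_filter_image_perm [DecidableEq T] {σ : Perm T} (hσ : ∀ x, p x ↔ p (σ x))
    (B : Finset T) :
    #((B.image σ).filter p) = #(B.filter p) := by
  rw [filter_image, card_image_of_injective _ σ.injective]
  simp only [← hσ]

noncomputable def Finset.equivFinSumFin {B : Finset T} {n i : ℕ} (hB : #B = n)
    (hi : #(B.filter p) = i) : B ≃ Fin i ⊕ Fin (n - i) :=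
  have hleft : Fintype.card {x : B // p x} = i := by
    simp [Fintype.card_subtype, filter_attach, hi]
  (sumCompl fun x : B => p x).symm.trans <| sumCongr (Fintype.equivFinOfCardEq hleft)
    (Fintype.equivFinOfCardEq <| by rw [Fintype.card_subtype_compl, hleft, Fintype.card_coe, hB])

theorem Finset.equivFinSumFin_symm_apply_iff {B : Finset T} {n i : ℕ} (hB : #B = n)
    (hi : #(B.filter p) = i) (z : Fin i ⊕ Fin (n - i)) :
    p ((equivFinSumFin p hB hi).symm z) ↔ z.isLeft := by
  obtain ⟨x, rfl⟩ := (equivFinSumFin p hB hi).surjective z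
  by_cases h : p x <;> simp [equivFinSumFin, h]

/-- `⟨i, j, z⟩` stands for the point `z` of the `j`-th part with `i` points satisfying `p`; the
points satisfying `p` are those with `z` on the left. -/
abbrev BlockModel (n : ℕ) (m : ℕ → ℕ) : Type :=
  Σ i : Fin (n + 1), Fin (m i) × (Fin i ⊕ Fin (n - i))

namespace Finpartition

variable [Fintype T] [DecidableEq T] (π : Finpartition (univ : Finset T))

def partsWithCount (i : ℕ) : Finset (Finset T) :=
  π.parts.filter fun B => #(B.filter p) = i

noncomputable def countBlock (i : ℕ) (j : Fin #(π.partsWithCount p i)) : Finset T :=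
  (π.partsWithCount p i).equivFin.symm j

variable {p π} {i : ℕ}

theorem countBlock_mem_parts (j : Fin #(π.partsWithCount p i)) :
    π.countBlock p i j ∈ π.parts :=
  (mem_filter.mp ((π.partsWithCount p i).equivFin.symm j).2).1

theorem card_filter_countBlock (j : Fin #(π.partsWithCount p i)) :
    #((π.countBlock p i j).filter p) = i :=
  (mem_filter.mp ((π.partsWithCount p i).equivFin.symm j).2).2

theorem countBlock_injective : Function.Injective (π.countBlock p i) :=
  fun _ _ h => (π.partsWithCount p i).equivFin.symm.injective (Subtype.ext h)

theorem exists_countBlock_eq {B : Finset T} (hB : B ∈ π.partsWithCount p i) :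
    ∃ j, π.countBlock p i j = B :=
  ⟨(π.partsWithCount p i).equivFin ⟨B, hB⟩, by simp [countBlock]⟩

variable {n : ℕ}

variable (p) in
theorem exists_countBlock_eq_of_mem_parts (hπn : ∀ B ∈ π.parts, #B = n) {B : Finset T}
    (hB : B ∈ π.parts) :
    ∃ (i : Fin (n + 1)) (j : Fin #(π.partsWithCount p i)), π.countBlock p i j = B := by
  have hi : #(B.filter p) < n + 1 := Nat.lt_succ_of_le (hπn B hB ▸ card_filter_le B p)
  exact ⟨⟨_, hi⟩, exists_countBlock_eq (mem_filter.mpr ⟨hB, rfl⟩)⟩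

variable (p π) (hπn : ∀ B ∈ π.parts, #B = n)

noncomputable def countBlockEquiv (i : Fin (n + 1)) (j : Fin #(π.partsWithCount p i)) :
    π.countBlock p i j ≃ Fin i ⊕ Fin (n - i) :=
  equivFinSumFin p (hπn _ (countBlock_mem_parts j)) (card_filter_countBlock j)

noncomputable def ofBlockModel (x : BlockModel n fun i => #(π.partsWithCount p i)) : T :=
  (π.countBlockEquiv p hπn x.1 x.2.1).symm x.2.2

variable {p π}

theorem ofBlockModel_mem (i : Fin (n + 1)) (j : Fin #(π.partsWithCount p i))
    (z : Fin i ⊕ Fin (n - i)) : π.ofBlockModel p hπn ⟨i, j, z⟩ ∈ π.countBlock p i j :=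
  Subtype.property _

theorem mem_countBlock_iff {i : Fin (n + 1)} {j : Fin #(π.partsWithCount p i)} {y : T} :
    y ∈ π.countBlock p i j ↔ ∃ z, π.ofBlockModel p hπn ⟨i, j, z⟩ = y :=
  ⟨fun hy => ⟨π.countBlockEquiv p hπn i j ⟨y, hy⟩, by simp [ofBlockModel]⟩,
    fun ⟨z, hz⟩ => hz ▸ ofBlockModel_mem hπn i j z⟩

theorem ofBlockModel_apply_iff (x : BlockModel n fun i => #(π.partsWithCount p i)) :
    p (π.ofBlockModel p hπn x) ↔ x.2.2.isLeft :=
  equivFinSumFin_symm_apply_iff p _ _ _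

theorem ofBlockModel_bijective : Function.Bijective (π.ofBlockModel p hπn) := by
  refine ⟨?_, fun y => ?_⟩
  · rintro ⟨i, j, z⟩ ⟨i', j', z'⟩ h
    have hblock : π.countBlock p i j = π.countBlock p i' j' :=
      π.eq_of_mem_parts (countBlock_mem_parts j) (countBlock_mem_parts j')
        (ofBlockModel_mem hπn i j z) (h ▸ ofBlockModel_mem hπn i' j' z')
    obtain rfl : i = i' := Fin.ext <| calc
      (i : ℕ) = #((π.countBlock p i j).filter p) := (card_filter_countBlock j).symm
      _ = i' := by rw [hblock, card_filter_countBlock]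
    obtain rfl : j = j' := countBlock_injective hblock
    simpa [ofBlockModel] using h
  · obtain ⟨i, j, hj⟩ :=
      exists_countBlock_eq_of_mem_parts p hπn (π.part_mem.mpr (mem_univ y))
    obtain ⟨z, hz⟩ := (mem_countBlock_iff hπn).mp (hj ▸ π.mem_part (mem_univ y))
    exact ⟨_, hz⟩

variable (p π)

noncomputable def blockModelEquiv : (BlockModel n fun i => #(π.partsWithCount p i)) ≃ T :=
  ofBijective _ (ofBlockModel_bijective hπn)

noncomputable def blockModelHom :
    (Π i : Fin (n + 1),
      WreathProduct (Perm (Fin i) × Perm (Fin (n - i))) #(π.partsWithCount p i)) →* Perm T :=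
  (π.blockModelEquiv p hπn).permCongrHom.toMonoidHom.comp
    (sigmaWreathToPerm (fun _ => Perm.sumCongrHom _ _) _)

variable {p π}

theorem blockModelHom_apply (w) (i : Fin (n + 1)) (j : Fin #(π.partsWithCount p i))
    (z : Fin i ⊕ Fin (n - i)) :
    π.blockModelHom p hπn w (π.ofBlockModel p hπn ⟨i, j, z⟩) =
      π.ofBlockModel p hπn
        ⟨i, (w i).right j, Perm.sumCongrHom _ _ ((w i).left ((w i).right j)) z⟩ :=
  congrArg (π.blockModelEquiv p hπn) <| congrArg (sigmaWreathToPerm _ _ w) <|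
    (π.blockModelEquiv p hπn).symm_apply_apply _

theorem blockModelHom_injective (hn : 1 ≤ n) : Function.Injective (π.blockModelHom p hπn) :=
  have := nonempty_fin_sum_fin_sub hn
  (π.blockModelEquiv p hπn).permCongrHom.injective.comp <|
    sigmaWreathToPerm_injective _ _ fun _ => Perm.sumCongrHom_injective

theorem apply_blockModelHom_iff (w) (x : T) : p (π.blockModelHom p hπn w x) ↔ p x := by
  obtain ⟨⟨i, j, z⟩, rfl⟩ := (ofBlockModel_bijective (p := p) hπn).2 x
  simp [blockModelHom_apply, ofBlockModel_apply_iff, Perm.sumCongrHom_apply]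

theorem image_countBlock_blockModelHom (w) (i : Fin (n + 1)) (j : Fin #(π.partsWithCount p i)) :
    (π.countBlock p i j).image (π.blockModelHom p hπn w) =
      π.countBlock p i ((w i).right j) := by
  ext y
  simp only [mem_image, mem_countBlock_iff hπn]
  constructor
  · rintro ⟨_, ⟨z, rfl⟩, rfl⟩
    exact ⟨_, (blockModelHom_apply hπn w i j z).symm⟩
  · rintro ⟨z, rfl⟩
    exact ⟨_, ⟨(Perm.sumCongrHom _ _ ((w i).left ((w i).right j))).symm z, rfl⟩,
      by rw [blockModelHom_apply, apply_symm_apply]⟩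

theorem exists_apply_ofBlockModel_eq {σ : Perm T} (hp : ∀ x, p x ↔ p (σ x))
    (hparts : ∀ B ∈ π.parts, B.image σ ∈ π.parts) (i : Fin (n + 1))
    (j : Fin #(π.partsWithCount p i)) :
    ∃ j' g, ∀ z, σ (π.ofBlockModel p hπn ⟨i, j, z⟩) =
      π.ofBlockModel p hπn ⟨i, j', Perm.sumCongrHom _ _ g z⟩ := by
  obtain ⟨j', hj'⟩ : ∃ j', π.countBlock p i j' = (π.countBlock p i j).image σ :=
    exists_countBlock_eq <| mem_filter.mpr ⟨hparts _ (countBlock_mem_parts j),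
      by rw [card_filter_image_perm p hp, card_filter_countBlock]⟩
  have hmaps (z) :
      ∃ z', π.ofBlockModel p hπn ⟨i, j', z'⟩ = σ (π.ofBlockModel p hπn ⟨i, j, z⟩) :=
    (mem_countBlock_iff hπn).mp (hj' ▸ mem_image_of_mem σ (ofBlockModel_mem hπn i j z))
  choose f hf using hmaps
  have hf_inj : Function.Injective f := fun z₁ z₂ h => by
    simpa using (ofBlockModel_bijective hπn).1 <|
      σ.injective <| ((hf z₁).symm.trans (by rw [h])).trans (hf z₂)
  have hf_left (z) : (f z).isLeft = z.isLeft := Bool.eq_iff_iff.mpr <| calc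
    (f z).isLeft ↔ p (π.ofBlockModel p hπn ⟨i, j', f z⟩) :=
      (ofBlockModel_apply_iff hπn ⟨i, j', f z⟩).symm
    _ ↔ p (π.ofBlockModel p hπn ⟨i, j, z⟩) := by rw [hf, ← hp]
    _ ↔ z.isLeft := ofBlockModel_apply_iff hπn ⟨i, j, z⟩
  obtain ⟨g, hg⟩ := Perm.exists_sumCongrHom_eq hf_inj hf_left
  exact ⟨j', g, fun z => by rw [hg, hf]⟩

theorem exists_blockModelHom_eq (hn : 1 ≤ n) {σ : Perm T} (hp : ∀ x, p x ↔ p (σ x))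
    (hparts : ∀ B ∈ π.parts, B.image σ ∈ π.parts) :
    ∃ w, π.blockModelHom p hπn w = σ := by
  have := nonempty_fin_sum_fin_sub hn
  let E := π.blockModelEquiv p hπn
  obtain ⟨w, hw⟩ := exists_sigmaWreathToPerm_eq _ _ (E.symm.permCongr σ) fun i j => by
    obtain ⟨j', g, h⟩ := exists_apply_ofBlockModel_eq hπn hp hparts i j
    exact ⟨j', g, fun z => by rw [permCongr_apply, symm_symm, E.symm_apply_eq]; exact h z⟩
  refine ⟨w, ?_⟩
  change E.permCongr (sigmaWreathToPerm _ _ w) = σ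
  rw [hw, ← permCongr_symm, apply_symm_apply]

theorem range_blockModelHom (hn : 1 ≤ n) :
    ((π.blockModelHom p hπn).range : Set (Perm T)) =
      {σ : Perm T | (∀ x, p x ↔ p (σ x)) ∧
        ∀ B ∈ π.parts, B.image σ ∈ π.parts} := by
  ext σ
  constructor
  · rintro ⟨w, rfl⟩
    refine ⟨fun x => (apply_blockModelHom_iff hπn w x).symm, fun B hB => ?_⟩
    obtain ⟨i, j, rfl⟩ := exists_countBlock_eq_of_mem_parts p hπn hB
    rw [image_countBlock_blockModelHom]
    exact countBlock_mem_parts _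
  · rintro ⟨hp, hparts⟩
    exact exists_blockModelHom_eq hπn hn hp hparts

end Finpartition

end BlockModel

theorem young_stabilizer_iso_prod_wreath_general
    (n k a : ℕ) (hn : 1 ≤ n)
    (π : Finpartition (Finset.univ : Finset (Fin (n * k))))
    (hπn : ∀ B ∈ π.parts, B.card = n)
    (m : ℕ → ℕ)
    (hm : ∀ i, m i = (π.parts.filter fun B => (B.filter fun x => x.val < a).card = i).card) :
    ∃ H : Subgroup (Equiv.Perm (Fin (n * k))),
      ((H : Set (Equiv.Perm (Fin (n * k)))) =
        {σ : Equiv.Perm (Fin (n * k)) |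
          (∀ x : Fin (n * k), x.val < a ↔ (σ x).val < a) ∧
          ∀ B ∈ π.parts, B.image σ ∈ π.parts}) ∧
      Nonempty (H ≃* Π i : Fin (n + 1),
        WreathProduct (Equiv.Perm (Fin i.val) × Equiv.Perm (Fin (n - i.val))) (m i.val)) := by
  obtain rfl : m = fun i => #(π.partsWithCount (fun x => x.val < a) i) := funext hm
  exact ⟨_, π.range_blockModelHom hπn hn,
    ⟨(MonoidHom.ofInjective (π.blockModelHom_injective hπn hn)).symm⟩⟩

/-- The stabilizer, inside the Young subgroup `S_a × S_b ≤ S_{nk}`, of a partition of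
`{1,…,nk}` into `k` blocks of cardinality `n` is isomorphic to the direct product of
wreath products `∏_{i=0}^n (S_i × S_{n−i}) ≀ S_{m_i}`, where `m_i` is the number
of blocks meeting `{1,…,a}` in exactly `i` points. -/
theorem young_stabilizer_iso_prod_wreath
    (n k a b : ℕ) (hn : 1 ≤ n) (hk : 1 ≤ k) (hab : a + b = n * k)
    (π : Finpartition (Finset.univ : Finset (Fin (n * k))))
    (hπk : π.parts.card = k) (hπn : ∀ B ∈ π.parts, B.card = n)
    (m : ℕ → ℕ)
    (hm : ∀ i, m i = (π.parts.filter fun B => (B.filter fun x => x.val < a).card = i).card) :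
    ∃ H : Subgroup (Equiv.Perm (Fin (n * k))),
      ((H : Set (Equiv.Perm (Fin (n * k)))) =
        {σ : Equiv.Perm (Fin (n * k)) |
          (∀ x : Fin (n * k), x.val < a ↔ (σ x).val < a) ∧
          ∀ B ∈ π.parts, B.image σ ∈ π.parts}) ∧
      Nonempty (H ≃* Π i : Fin (n + 1),
        WreathProduct (Equiv.Perm (Fin i.val) × Equiv.Perm (Fin (n - i.val))) (m i.val)) :=
  young_stabilizer_iso_prod_wreath_general n k a hn π hπn m hm
end

section
/- Fix an integer k ≥ 1 and a subset S ⊆ {1, …, k}. Both of the sets I_S[k] and I'_S[k] of admissible tuples are nonempty and closed under the operation taking two tuples to their componentwise minimum (on the entries i_1, …, i_k). Consequently, each of I_S[k] and I'_S[k] has a unique least element with respect to the partial order by componentwise comparison; these least elements are denoted L_{S,k} and L'_{S,k} respectively. -/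
/-- A `2k`-tuple `(ε_1, i_1, …, ε_k, i_k)`; the position `t : Fin k` encodes the
index `j = t + 1 ∈ {1, …, k}`. -/
structure DLTuple (k : ℕ) where
  eps : Fin k → ℕ
  idx : Fin k → ℕ

namespace DLTuple

/-- Admissibility: each `ε_j ∈ {0,1}` and, for all `1 ≤ j < k`,
`i_j ≤ i_{j+1} − ε_{j+1}` and `i_j ≡ i_{j+1} − ε_{j+1} (mod 2)`. -/
def Admissible {k : ℕ} (I : DLTuple k) : Prop :=
  (∀ j, I.eps j ≤ 1) ∧
  ∀ (j : ℕ) (h : j + 1 < k),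
    I.idx ⟨j, Nat.lt_of_succ_lt h⟩ + I.eps ⟨j + 1, h⟩ ≤ I.idx ⟨j + 1, h⟩ ∧
    (I.idx ⟨j, Nat.lt_of_succ_lt h⟩ + I.eps ⟨j + 1, h⟩) % 2 = I.idx ⟨j + 1, h⟩ % 2

/-- Membership in `I_S[k]`: admissible, `ε_j = 1` iff `k+1−j ∈ S`, and
`i_j ≡ |S ∩ {1,…,k−j}| (mod 2)`.  Here an element `s : Fin k` of `S` encodes
the integer `s + 1 ∈ {1, …, k}`, so `k+1−j` is encoded by `Fin.rev`. -/
def MemI {k : ℕ} (S : Finset (Fin k)) (I : DLTuple k) : Prop :=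
  I.Admissible ∧ (∀ j : Fin k, I.eps j = 1 ↔ j.rev ∈ S) ∧
  ∀ j : Fin k, I.idx j % 2 = (S.filter fun s => s.val + 1 + (j.val + 1) ≤ k).card % 2

/-- Membership in `I'_S[k]`: as `I_S[k]`, but with
`i_j ≡ |S ∩ {1,…,k−j}| + 1 (mod 2)`. -/
def MemI' {k : ℕ} (S : Finset (Fin k)) (I : DLTuple k) : Prop :=
  I.Admissible ∧ (∀ j : Fin k, I.eps j = 1 ↔ j.rev ∈ S) ∧
  ∀ j : Fin k, I.idx j % 2 =
    ((S.filter fun s => s.val + 1 + (j.val + 1) ≤ k).card + 1) % 2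

/-- Componentwise comparison of the entries `i_1, …, i_k`. -/
def dle {k : ℕ} (I J : DLTuple k) : Prop := ∀ j, I.idx j ≤ J.idx j

/-- Componentwise minimum on the entries `i_1, …, i_k`. -/
def dmin {k : ℕ} (I J : DLTuple k) : DLTuple k :=
  ⟨I.eps, fun j => min (I.idx j) (J.idx j)⟩

/-- Componentwise addition (in all `2k` entries). -/
def dadd {k : ℕ} (I J : DLTuple k) : DLTuple k :=
  ⟨fun j => I.eps j + J.eps j, fun j => I.idx j + J.idx j⟩

/-- The tuple `I_{j,k}`: all `ε`-entries `0`, `i_l = 0` for `l ≤ k − j` and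
`i_l = 2` for `l > k − j` (here `j : Fin k` encodes the integer `j + 1`). -/
def Ijk {k : ℕ} (j : Fin k) : DLTuple k :=
  ⟨fun _ => 0, fun t => if t.val + j.val + 2 ≤ k then 0 else 2⟩

end DLTuple

/-!
Once `S` is fixed, the `ε`-entries of a tuple in `I_S[k]` or `I'_S[k]` are forced, and the
prescribed parities `p_j` of the `i`-entries satisfy `p_j + ε_{j+1} ≡ p_{j+1}`, so the
congruence in admissibility holds automatically. What is left is the set of vectors
`i ∈ ℕ^k` with fixed parities and `i_j + ε_{j+1} ≤ i_{j+1}`: both conditions survive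
componentwise minima, and `i_j = 2j + (p_j mod 2)` is a member. A nonempty inf-closed subset of the
well-founded lattice `ℕ^k` has a least element: a minimal element `m` satisfies
`m ⊓ x = m` for every member `x`.
-/

theorem InfClosed.exists_isLeast {α : Type*} [SemilatticeInf α] [WellFoundedLT α] {s : Set α}
    (hs : InfClosed s) (hne : s.Nonempty) : ∃ a, IsLeast s a := by
  obtain ⟨m, hm⟩ := exists_minimal_of_wellFoundedLT (· ∈ s) hne
  exact ⟨m, hm.prop, fun x hx => (hm.le_of_le (hs hm.prop hx) inf_le_left).trans inf_le_right⟩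

namespace DLTuple

variable {k : ℕ}

theorem ext {I J : DLTuple k} (heps : I.eps = J.eps) (hidx : I.idx = J.idx) : I = J := by
  cases I
  cases J
  congr

def epsOf (S : Finset (Fin k)) (j : Fin k) : ℕ := if j.rev ∈ S then 1 else 0

/-- `|S ∩ {1, …, k - j}|`, in the encoding of `MemI`. -/
def countBelow (S : Finset (Fin k)) (j : Fin k) : ℕ :=
  (S.filter fun s => s.val + 1 + (j.val + 1) ≤ k).card

/-- `MemI` and `MemI'` with an arbitrary parity pattern `p` for the `i`-entries. -/
def MemParity (S : Finset (Fin k)) (p : Fin k → ℕ) (I : DLTuple k) : Prop :=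
  I.Admissible ∧ (∀ j : Fin k, I.eps j = 1 ↔ j.rev ∈ S) ∧ ∀ j : Fin k, I.idx j % 2 = p j % 2

def ParityCompatible (ε p : Fin k → ℕ) : Prop :=
  ∀ (j : ℕ) (h : j + 1 < k), (p ⟨j, Nat.lt_of_succ_lt h⟩ + ε ⟨j + 1, h⟩) % 2 = p ⟨j + 1, h⟩ % 2

def idxSet (ε p : Fin k → ℕ) : Set (Fin k → ℕ) :=
  {x | (∀ j, x j % 2 = p j % 2) ∧
    ∀ (j : ℕ) (h : j + 1 < k), x ⟨j, Nat.lt_of_succ_lt h⟩ + ε ⟨j + 1, h⟩ ≤ x ⟨j + 1, h⟩}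

theorem epsOf_le_one (S : Finset (Fin k)) (j : Fin k) : epsOf S j ≤ 1 := by
  unfold epsOf
  split <;> simp

theorem eps_eq_epsOf_iff {S : Finset (Fin k)} {e : Fin k → ℕ} (he : ∀ j, e j ≤ 1) :
    (∀ j, e j = 1 ↔ j.rev ∈ S) ↔ e = epsOf S := by
  constructor
  · intro h
    funext j
    have := he j
    unfold epsOf
    split_ifs with hj <;> grind
  · rintro rfl j
    unfold epsOf
    split_ifs <;> simp_all

theorem ParityCompatible.add_const {ε p : Fin k → ℕ} (hp : ParityCompatible ε p) (c : ℕ) :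
    ParityCompatible ε (fun j => p j + c) := fun j h => by
  have := hp j h
  dsimp only
  omega

theorem memParity_iff {S : Finset (Fin k)} {p : Fin k → ℕ}
    (hp : ParityCompatible (epsOf S) p) (I : DLTuple k) :
    MemParity S p I ↔ I.eps = epsOf S ∧ I.idx ∈ idxSet (epsOf S) p := by
  obtain ⟨e, i⟩ := I
  constructor
  · rintro ⟨⟨he, hadm⟩, hS, hpar⟩
    obtain rfl : e = epsOf S := (eps_eq_epsOf_iff he).1 hS
    exact ⟨rfl, hpar, fun j h => (hadm j h).1⟩
  · rintro ⟨rfl, hpar, hle⟩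
    refine ⟨⟨epsOf_le_one S, fun j h => ⟨hle j h, ?_⟩⟩, (eps_eq_epsOf_iff (epsOf_le_one S)).2 rfl,
      hpar⟩
    have := hp j h
    have := hpar ⟨j, Nat.lt_of_succ_lt h⟩
    have := hpar ⟨j + 1, h⟩
    dsimp only at *
    omega

theorem infClosed_idxSet (ε p : Fin k → ℕ) : InfClosed (idxSet ε p) := by
  rintro x ⟨hxp, hxle⟩ y ⟨hyp, hyle⟩
  refine ⟨fun j => ?_, fun j h => ?_⟩
  · have := hxp j
    have := hyp j
    simp only [Pi.inf_apply]
    omega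
  · have := hxle j h
    have := hyle j h
    simp only [Pi.inf_apply]
    omega

theorem idxSet_nonempty {ε p : Fin k → ℕ} (hε : ∀ j, ε j ≤ 1) (hp : ParityCompatible ε p) :
    (idxSet ε p).Nonempty := by
  refine ⟨fun j => 2 * j.val + p j % 2, fun j => by dsimp only; omega, fun j h => ?_⟩
  have := hε ⟨j + 1, h⟩
  have := hp j h
  dsimp only
  omega

theorem memParity_nonempty_min_closed_least {S : Finset (Fin k)} {p : Fin k → ℕ}
    (hp : ParityCompatible (epsOf S) p) :
    (∃ I, MemParity S p I) ∧
      (∀ I J, MemParity S p I → MemParity S p J → MemParity S p (dmin I J)) ∧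
      (∃! L, MemParity S p L ∧ ∀ I, MemParity S p I → dle L I) := by
  simp only [memParity_iff hp]
  obtain ⟨x, hx⟩ := idxSet_nonempty (epsOf_le_one S) hp
  obtain ⟨m, hm, hmle⟩ := (infClosed_idxSet _ p).exists_isLeast ⟨x, hx⟩
  refine ⟨⟨⟨epsOf S, x⟩, rfl, hx⟩, ?_, ⟨epsOf S, m⟩, ⟨⟨rfl, hm⟩, fun I hI => hmle hI.2⟩, ?_⟩
  · rintro I J ⟨hI, hIx⟩ ⟨-, hJx⟩
    exact ⟨hI, infClosed_idxSet _ p hIx hJx⟩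
  · rintro L ⟨⟨hLe, hL⟩, hLle⟩
    exact ext hLe (funext fun j => le_antisymm (hLle ⟨epsOf S, m⟩ ⟨rfl, hm⟩ j) (hmle hL j))

theorem countBelow_eq_countBelow_succ_add (S : Finset (Fin k)) (j : ℕ) (h : j + 1 < k) :
    countBelow S ⟨j, Nat.lt_of_succ_lt h⟩ = countBelow S ⟨j + 1, h⟩ + epsOf S ⟨j + 1, h⟩ := by
  set x : Fin k := (⟨j + 1, h⟩ : Fin k).rev
  have hx : x.val = k - (j + 2) := Fin.val_rev _
  have hsplit : (S.filter fun s => s.val + 1 + (j + 1) ≤ k)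
      = S.filter fun s => s.val + 1 + (j + 1 + 1) ≤ k ∨ s = x :=
    Finset.filter_congr fun s _ => by
      rw [Fin.ext_iff, hx]
      omega
  have hdisj : Disjoint (S.filter fun s => s.val + 1 + (j + 1 + 1) ≤ k) (S.filter (· = x)) := by
    rw [Finset.disjoint_filter]
    rintro s - hs rfl
    omega
  simp only [countBelow]
  rw [hsplit, Finset.filter_or, Finset.card_union_of_disjoint hdisj, Finset.filter_eq', epsOf]
  split_ifs <;> simp

theorem parityCompatible_countBelow (S : Finset (Fin k)) :
    ParityCompatible (epsOf S) (countBelow S) := fun j h => by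
  rw [countBelow_eq_countBelow_succ_add S j h]
  have := epsOf_le_one S ⟨j + 1, h⟩
  omega

end DLTuple

open DLTuple in
theorem admissible_sets_nonempty_min_closed_least_general (k : ℕ) (S : Finset (Fin k)) :
    ((∃ I, MemI S I) ∧
      (∀ I J, MemI S I → MemI S J → MemI S (dmin I J)) ∧
      (∃! L, MemI S L ∧ ∀ I, MemI S I → dle L I)) ∧
    ((∃ I, MemI' S I) ∧
      (∀ I J, MemI' S I → MemI' S J → MemI' S (dmin I J)) ∧
      (∃! L, MemI' S L ∧ ∀ I, MemI' S I → dle L I)) :=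
  ⟨memParity_nonempty_min_closed_least (parityCompatible_countBelow S),
    memParity_nonempty_min_closed_least ((parityCompatible_countBelow S).add_const 1)⟩

open DLTuple in
/-- `I_S[k]` and `I'_S[k]` are nonempty, closed under componentwise minimum of the
`i`-entries, and hence each has a unique least element for componentwise comparison. -/
theorem admissible_sets_nonempty_min_closed_least (k : ℕ) (hk : 1 ≤ k) (S : Finset (Fin k)) :
    ((∃ I, MemI S I) ∧
      (∀ I J, MemI S I → MemI S J → MemI S (dmin I J)) ∧
      (∃! L, MemI S L ∧ ∀ I, MemI S I → dle L I)) ∧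
    ((∃ I, MemI' S I) ∧
      (∀ I J, MemI' S I → MemI' S J → MemI' S (dmin I J)) ∧
      (∃! L, MemI' S L ∧ ∀ I, MemI' S I → dle L I)) :=
  admissible_sets_nonempty_min_closed_least_general k S
end

section
/- Fix an integer k ≥ 1 and a subset S ⊆ {1, …, k}. Then the map from ℕ^k to I'_S[k] sending (n_1, …, n_k) to the componentwise sum L'_{S,k} + ∑_{j=1}^k n_j · I_{j,k} is a bijection. -/
/-!
The least element `L` of `I'_S[k]` is tight, `i_{j+1} = i_j + ε_{j+1}`: otherwise lowering
`i_{j+1}` by `2` would give a smaller element of `I'_S[k]`. Every element of `I'_S[k]` has the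
`ε`-entries and the parities of `L`, and lies above `L`, so it is `L` plus an even vector `D` of
`i`-entries; admissibility and tightness of `L` make `D` nondecreasing. On the other hand the
`i`-entries of `∑ n_j I_{j,k}` are twice the partial sums `n_k + n_{k-1} + ⋯`, and these are
exactly the even nondecreasing vectors, each obtained from a single `n`.
-/

open Finset

namespace DLTuple

variable {k : ℕ}

def lincomb (n : Fin k → ℕ) : DLTuple k :=
  ⟨fun t => ∑ j : Fin k, n j * (Ijk j).eps t, fun t => ∑ j : Fin k, n j * (Ijk j).idx t⟩

lemma lincomb_idx (n : Fin k → ℕ) (t : Fin k) :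
    (lincomb n).idx t = ∑ j : Fin k, n j * (Ijk j).idx t := rfl

@[simp]
lemma lincomb_eps (n : Fin k → ℕ) (t : Fin k) : (lincomb n).eps t = 0 := by
  simp [lincomb, Ijk]

lemma lincomb_idx_zero (n : Fin k → ℕ) (j : Fin k) (hj : j.val + 1 = k) :
    (lincomb n).idx ⟨0, j.pos⟩ = 2 * n j := by
  rw [lincomb_idx, Fintype.sum_eq_single j fun i hi => ?_]
  · simp only [Ijk]
    rw [if_neg (by omega), mul_comm]
  · have : i.val ≠ j.val := fun h => hi (Fin.ext h)
    simp only [Ijk]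
    rw [if_pos (by omega), mul_zero]

lemma lincomb_idx_succ (n : Fin k → ℕ) (j : Fin k) (t : ℕ) (ht : t + 1 < k)
    (hjt : j.val + t + 2 = k) :
    (lincomb n).idx ⟨t + 1, ht⟩ = (lincomb n).idx ⟨t, by omega⟩ + 2 * n j := by
  have hterm : ∀ i : Fin k,
      (Ijk i).idx ⟨t + 1, ht⟩ = (Ijk i).idx ⟨t, by omega⟩ + if j = i then 2 else 0 := by
    intro i
    simp only [Ijk, Fin.ext_iff]
    split_ifs <;> omega
  simp only [lincomb, hterm, mul_add, sum_add_distrib, mul_ite, mul_zero,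
    Fintype.sum_ite_eq, mul_comm 2]

lemma lincomb_idx_mod_two (n : Fin k → ℕ) (t : Fin k) : (lincomb n).idx t % 2 = 0 :=
  Nat.mod_eq_zero_of_dvd <| (lincomb_idx n t).symm ▸ dvd_sum fun j _ => by
    simp only [Ijk]
    split_ifs <;> simp

lemma lincomb_idx_injective : Function.Injective fun n : Fin k → ℕ => (lincomb n).idx := by
  intro n m h
  funext j
  have h' : ∀ t, (lincomb n).idx t = (lincomb m).idx t := congrFun h
  by_cases hj : j.val + 1 = k
  · have := h' ⟨0, j.pos⟩
    rw [lincomb_idx_zero n j hj, lincomb_idx_zero m j hj] at this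
    omega
  · have ht : k - 2 - j.val + 1 < k := by omega
    have hjt : j.val + (k - 2 - j.val) + 2 = k := by omega
    have := h' ⟨_, ht⟩
    rw [lincomb_idx_succ n j _ ht hjt, lincomb_idx_succ m j _ ht hjt, h'] at this
    omega

lemma exists_lincomb_idx_eq (D : Fin k → ℕ) (heven : ∀ t, D t % 2 = 0)
    (hmono : ∀ (t : ℕ) (ht : t + 1 < k), D ⟨t, by omega⟩ ≤ D ⟨t + 1, ht⟩) :
    ∃ n, (lincomb n).idx = D := by
  refine ⟨fun j => if hj : j.val + 1 = k then D ⟨0, by omega⟩ / 2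
    else (D ⟨k - 1 - j.val, by omega⟩ - D ⟨k - 2 - j.val, by omega⟩) / 2, ?_⟩
  suffices h : ∀ (t : ℕ) (ht : t < k), (lincomb _).idx ⟨t, ht⟩ = D ⟨t, ht⟩ from
    funext fun t => h t t.isLt
  intro t
  induction t with
  | zero =>
    intro ht
    have := heven ⟨0, ht⟩
    rw [lincomb_idx_zero _ ⟨k - 1, by omega⟩ (by simp; omega), dif_pos (by simp; omega)]
    omega
  | succ t ih =>
    intro ht
    rw [lincomb_idx_succ _ ⟨k - 2 - t, by omega⟩ t ht (by simp; omega), ih,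
      dif_neg (by simp; omega)]
    simp only [show k - 1 - (k - 2 - t) = t + 1 by omega, show k - 2 - (k - 2 - t) = t by omega]
    have := heven ⟨t, by omega⟩
    have := heven ⟨t + 1, ht⟩
    have := hmono t ht
    omega

lemma dadd_lincomb_injective (L : DLTuple k) : Function.Injective fun n => dadd L (lincomb n) :=
  fun _ _ h => lincomb_idx_injective <| funext fun t =>
    Nat.add_left_cancel (congrFun (congrArg idx h) t)

variable {S : Finset (Fin k)} {I L : DLTuple k}

lemma MemI'.dadd_lincomb (hL : MemI' S L) (n : Fin k → ℕ) : MemI' S (dadd L (lincomb n)) := by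
  obtain ⟨⟨heps_le, hadm⟩, heps, hpar⟩ := hL
  refine ⟨⟨fun j => by simpa [dadd] using heps_le j, fun t ht => ?_⟩,
    fun j => by simpa [dadd] using heps j, fun t => ?_⟩
  · have := hadm t ht
    have := lincomb_idx_succ n ⟨k - 2 - t, by omega⟩ t ht (by simp; omega)
    have := lincomb_idx_mod_two n ⟨t, by omega⟩
    simp only [dadd, lincomb_eps, add_zero]
    omega
  · have := hpar t
    have := lincomb_idx_mod_two n t
    simp only [dadd]
    omega

lemma MemI'.eps_eq (hI : MemI' S I) (hL : MemI' S L) (j : Fin k) : I.eps j = L.eps j := by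
  have hI1 := hI.1.1 j
  have hL1 := hL.1.1 j
  by_cases h : j.rev ∈ S
  · rw [(hI.2.1 j).2 h, (hL.2.1 j).2 h]
  · have := mt (hI.2.1 j).1 h
    have := mt (hL.2.1 j).1 h
    omega

lemma MemI'.idx_mod_two_eq (hI : MemI' S I) (hL : MemI' S L) (j : Fin k) :
    I.idx j % 2 = L.idx j % 2 :=
  (hI.2.2 j).trans (hL.2.2 j).symm

lemma MemI'.lower_two (hI : MemI' S I) (t : ℕ) (ht : t + 1 < k)
    (hslack : I.idx ⟨t, by omega⟩ + I.eps ⟨t + 1, ht⟩ + 2 ≤ I.idx ⟨t + 1, ht⟩) :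
    MemI' S ⟨I.eps, Function.update I.idx ⟨t + 1, ht⟩ (I.idx ⟨t + 1, ht⟩ - 2)⟩ := by
  obtain ⟨⟨heps_le, hadm⟩, heps, hpar⟩ := hI
  refine ⟨⟨heps_le, fun s hs => ?_⟩, heps, fun s => ?_⟩
  · have := hadm s hs
    -- `omega` only identifies the entries at `s` and `t` once `s = t` is substituted
    obtain rfl | rfl | _ : s = t ∨ s = t + 1 ∨ (s ≠ t ∧ s ≠ t + 1) := by omega
    all_goals
      simp only [Function.update_apply, Fin.ext_iff]
      split_ifs <;> omega
  · have := hpar s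
    simp only [Function.update_apply]
    split_ifs with h
    · subst h
      omega
    · exact this

lemma idx_succ_eq_of_least (hL : MemI' S L) (hmin : ∀ I, MemI' S I → dle L I)
    (t : ℕ) (ht : t + 1 < k) :
    L.idx ⟨t + 1, ht⟩ = L.idx ⟨t, by omega⟩ + L.eps ⟨t + 1, ht⟩ := by
  obtain ⟨hle, hpar⟩ := hL.1.2 t ht
  by_contra hne
  have := hmin _ (hL.lower_two t ht (by omega)) ⟨t + 1, ht⟩
  simp only [Function.update_self] at this
  omega

lemma exists_dadd_lincomb_eq (hL : MemI' S L) (hmin : ∀ I, MemI' S I → dle L I)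
    (hI : MemI' S I) : ∃ n, dadd L (lincomb n) = I := by
  have hle := hmin I hI
  obtain ⟨n, hn⟩ := exists_lincomb_idx_eq (fun t => I.idx t - L.idx t)
    (fun t => by
      have := hI.idx_mod_two_eq hL t
      have := hle t
      omega)
    (fun t ht => by
      have := (hI.1.2 t ht).1
      have := idx_succ_eq_of_least hL hmin t ht
      have := hI.eps_eq hL ⟨t + 1, ht⟩
      have := hle ⟨t, by omega⟩
      omega)
  refine ⟨n, ?_⟩
  obtain ⟨eps, idx⟩ := I
  simp only [dadd, lincomb_eps, add_zero, hn, mk.injEq]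
  exact ⟨funext fun j => (hI.eps_eq hL j).symm, funext fun j => Nat.add_sub_cancel' (hle j)⟩

end DLTuple

open DLTuple in
theorem bijection_onto_I'_of_least_general (k : ℕ) (S : Finset (Fin k))
    (L : DLTuple k) (hL : MemI' S L ∧ ∀ I, MemI' S I → dle L I) :
    (∀ n : Fin k → ℕ,
      MemI' S (dadd L ⟨fun t => ∑ j : Fin k, n j * (Ijk j).eps t,
                       fun t => ∑ j : Fin k, n j * (Ijk j).idx t⟩)) ∧
    (∀ I, MemI' S I → ∃! n : Fin k → ℕ,
      dadd L ⟨fun t => ∑ j : Fin k, n j * (Ijk j).eps t,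
              fun t => ∑ j : Fin k, n j * (Ijk j).idx t⟩ = I) := by
  obtain ⟨hLmem, hmin⟩ := hL
  refine ⟨hLmem.dadd_lincomb, fun I hI => ?_⟩
  obtain ⟨n, hn⟩ := exists_dadd_lincomb_eq hLmem hmin hI
  exact ⟨n, hn, fun m hm => dadd_lincomb_injective L (hm.trans hn.symm)⟩

open DLTuple in
/-- The map `(n_1, …, n_k) ↦ L'_{S,k} + ∑_j n_j · I_{j,k}` is a bijection from `ℕ^k`
onto `I'_S[k]`, where `L'_{S,k}` is the least element of `I'_S[k]`. -/
theorem bijection_onto_I'_of_least (k : ℕ) (hk : 1 ≤ k) (S : Finset (Fin k))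
    (L : DLTuple k) (hL : MemI' S L ∧ ∀ I, MemI' S I → dle L I) :
    (∀ n : Fin k → ℕ,
      MemI' S (dadd L ⟨fun t => ∑ j : Fin k, n j * (Ijk j).eps t,
                       fun t => ∑ j : Fin k, n j * (Ijk j).idx t⟩)) ∧
    (∀ I, MemI' S I → ∃! n : Fin k → ℕ,
      dadd L ⟨fun t => ∑ j : Fin k, n j * (Ijk j).eps t,
              fun t => ∑ j : Fin k, n j * (Ijk j).idx t⟩ = I) :=
  bijection_onto_I'_of_least_general k S L hL
end

section
/- Fix an integer k ≥ 2 and let τ be a k-cycle in the symmetric group on {1, …, k}. Then the map τ̄ : {1, …, 2^k} → {1, …, 2^k} defined by τ̄(i) = 2^k − ∑_{j=0}^{k−1} 2^j · ν_{τ(j+1)−1}(2^k − i) is a permutation of {1, …, 2^k} of order exactly k, and its fixed points are exactly the two elements 1 and 2^k. -/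
/-!
Reading the binary digits of `y ∈ {0, …, 2^k - 1}` as a word in `{0,1}^k`, the map
`y ↦ ∑ 2^j ν_{τ(j)}(y)` precomposes that word with `τ`, and `τ̄` is this digit permutation
conjugated by the reversal `i ↦ 2^k - i`. Precomposition is a faithful action of the symmetric
group on `{0,1}^k`, so the order is that of `τ`, namely `k`; a word is fixed iff it is constant
on the single orbit of `τ`, i.e. it is `0⋯0` or `1⋯1`, which correspond to `i = 2^k` and `i = 1`.
-/

/-- `ν_j(a)`: the coefficient of `2^j` in the binary expansion of `a`. -/
def nuBit (j a : ℕ) : ℕ := a / 2 ^ j % 2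

/-- The map `τ̄(i) = 2^k − ∑_{j=0}^{k−1} 2^j · ν_{τ(j+1)−1}(2^k − i)` on `{1, …, 2^k}`,
where the permutation `τ` of `{1, …, k}` is encoded `0`-based as `τ : Equiv.Perm (Fin k)`. -/
def tauBar {k : ℕ} (τ : Equiv.Perm (Fin k)) (i : ℕ) : ℕ :=
  2 ^ k - ∑ j : Fin k, 2 ^ j.val * nuBit (τ j).val (2 ^ k - i)

open Equiv Finset

lemma DomMulAct.orderOf_mk {M : Type*} [Monoid M] (a : M) :
    orderOf (DomMulAct.mk a) = orderOf a :=
  orderOf_eq_orderOf_iff.mpr fun n => by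
    rw [← DomMulAct.mk_pow, ← DomMulAct.mk_one, DomMulAct.mk.injective.eq_iff]

lemma MulAction.orderOf_toPerm {G α : Type*} [Group G] [MulAction G α] [FaithfulSMul G α]
    (g : G) : orderOf (MulAction.toPerm g : Perm α) = orderOf g :=
  orderOf_injective (MulAction.toPermHom G α) MulAction.toPerm_injective g

lemma Equiv.Perm.IsCycle.domMulAct_mk_smul_eq_self_iff {α β : Type*} [Fintype α] [DecidableEq α]
    {τ : Perm α} (hτ : τ.IsCycle) (hsupp : τ.support = univ) {f : α → β} :
    DomMulAct.mk τ • f = f ↔ ∃ c, f = Function.const α c := by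
  constructor
  · intro hf
    have hinv (n : ℕ) (a : α) : f ((τ ^ n) a) = f a := by
      have := MulAction.mem_stabilizer_iff.mp
        (pow_mem (MulAction.mem_stabilizer_iff.mpr hf) n)
      rw [← DomMulAct.mk_pow] at this
      exact congrFun this a
    have hmoves (a : α) : τ a ≠ a := Perm.mem_support.mp (hsupp ▸ mem_univ a)
    obtain ⟨a₀, -⟩ := id hτ
    refine ⟨f a₀, funext fun a => ?_⟩
    obtain ⟨n, rfl⟩ := hτ.exists_pow_eq (hmoves a₀) (hmoves a)
    exact hinv n a₀
  · rintro ⟨c, rfl⟩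
    rfl

lemma val_finFunctionFinEquiv_const (k : ℕ) (c : Fin 2) :
    (finFunctionFinEquiv (Function.const (Fin k) c) : ℕ) = c * (2 ^ k - 1) := by
  rw [finFunctionFinEquiv_apply]
  simp only [Function.const_apply, ← mul_sum]
  rw [Fin.sum_univ_eq_sum_range (2 ^ ·), Nat.geomSum_eq le_rfl, Nat.div_one]

def bitPerm {k : ℕ} (τ : Perm (Fin k)) : Perm (Fin (2 ^ k)) :=
  finFunctionFinEquiv.permCongr (MulAction.toPerm (DomMulAct.mk τ))

lemma val_bitPerm {k : ℕ} (τ : Perm (Fin k)) (y : Fin (2 ^ k)) :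
    (bitPerm τ y : ℕ) = ∑ j : Fin k, 2 ^ j.val * nuBit (τ j).val y := by
  simp only [bitPerm, permCongr_apply, finFunctionFinEquiv_apply, MulAction.toPerm_apply,
    DomMulAct.smul_apply, finFunctionFinEquiv_symm_apply_val, nuBit]
  exact sum_congr rfl fun j _ => mul_comm _ _

lemma orderOf_bitPerm {k : ℕ} (τ : Perm (Fin k)) : orderOf (bitPerm τ) = orderOf τ :=
  (MulEquiv.orderOf_eq finFunctionFinEquiv.permCongrHom _).trans <|
    (MulAction.orderOf_toPerm (α := Fin k → Fin 2) _).trans (DomMulAct.orderOf_mk τ)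

lemma bitPerm_apply_eq_self_iff {k : ℕ} {τ : Perm (Fin k)} (hτ : τ.IsCycle)
    (hsupp : τ.support = univ) (y : Fin (2 ^ k)) :
    bitPerm τ y = y ↔ y.val = 0 ∨ y.val = 2 ^ k - 1 := by
  rw [bitPerm, permCongr_apply, ← eq_symm_apply, MulAction.toPerm_apply,
    hτ.domMulAct_mk_smul_eq_self_iff hsupp, Fin.exists_fin_two]
  simp only [symm_apply_eq, Fin.ext_iff, val_finFunctionFinEquiv_const]
  omega

theorem tauBar_perm_order_fixedPoints_general (k : ℕ)
    (τ : Equiv.Perm (Fin k)) (hτ : τ.IsCycle ∧ τ.support.card = k) :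
    ∃ σ : Equiv.Perm (Fin (2 ^ k)),
      (∀ x : Fin (2 ^ k), (σ x).val + 1 = tauBar τ (x.val + 1)) ∧
      orderOf σ = k ∧
      ∀ x : Fin (2 ^ k), σ x = x ↔ (x.val + 1 = 1 ∨ x.val + 1 = 2 ^ k) := by
  have hsupp : τ.support = univ := eq_univ_of_card _ (by rw [hτ.2, Fintype.card_fin])
  refine ⟨Fin.revPerm.permCongr (bitPerm τ), fun x => ?_, ?_, fun x => ?_⟩
  · have hlt := (bitPerm τ x.rev).isLt
    simp only [permCongr_apply, Fin.revPerm_symm, Fin.revPerm_apply, Fin.val_rev,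
      val_bitPerm, tauBar] at hlt ⊢
    omega
  · exact (MulEquiv.orderOf_eq Fin.revPerm.permCongrHom _).trans <|
      (orderOf_bitPerm τ).trans (hτ.1.orderOf.trans hτ.2)
  · have hx := x.isLt
    rw [permCongr_apply, Fin.revPerm_symm, Fin.revPerm_apply, Fin.revPerm_apply,
      Fin.rev_eq_iff, bitPerm_apply_eq_self_iff hτ.1 hsupp, Fin.val_rev]
    omega

/-- For a `k`-cycle `τ` (`k ≥ 2`), the map `τ̄` is a permutation of `{1, …, 2^k}` of order
exactly `k` whose fixed points are exactly `1` and `2^k`.  We encode `{1, …, 2^k}` as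
`Fin (2^k)` via `x ↦ x + 1`. -/
theorem tauBar_perm_order_fixedPoints (k : ℕ) (hk : 2 ≤ k)
    (τ : Equiv.Perm (Fin k)) (hτ : τ.IsCycle ∧ τ.support.card = k) :
    ∃ σ : Equiv.Perm (Fin (2 ^ k)),
      (∀ x : Fin (2 ^ k), (σ x).val + 1 = tauBar τ (x.val + 1)) ∧
      orderOf σ = k ∧
      ∀ x : Fin (2 ^ k), σ x = x ↔ (x.val + 1 = 1 ∨ x.val + 1 = 2 ^ k) :=
  tauBar_perm_order_fixedPoints_general k τ hτ
end

section
/- Fix integers k ≥ 2, n, N ∈ ℕ, and let τ be a k-cycle in the symmetric group on {1, …, k}, with σ = τ̄ the associated permutation of {1, …, 2^k}. Let A_{n,k,N} be the set of 2^k-tuples (a_1, …, a_{2^k}) of natural numbers satisfying ∑_{i=1}^{2^k} a_i · ν_j(2^k − i) = n for every 0 ≤ j ≤ k−1, and ∑_{i=1}^{2^k} a_i = n + N. Then the action of σ on 2^k-tuples by permutation of the coordinates maps A_{n,k,N} bijectively onto itself. -/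
/-- Membership in `A_{n,k,N}`: the `2^k`-tuple `(a_1, …, a_{2^k})` (indexed by
`i : Fin (2^k)` encoding `i + 1`) satisfies `∑_i a_i ν_j(2^k − i) = n` for all
`0 ≤ j ≤ k−1` and `∑_i a_i = n + N`. -/
def MemA (n k N : ℕ) (a : Fin (2 ^ k) → ℕ) : Prop :=
  (∀ j : Fin k, ∑ i : Fin (2 ^ k), a i * nuBit j.val (2 ^ k - (i.val + 1)) = n) ∧
  ∑ i : Fin (2 ^ k), a i = n + N

/-!
The `j`-th binary digit of `2^k − τ̄(i)` is the `τ(j)`-th binary digit of `2^k − i`. Hence the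
`j`-th constraint of `A_{n,k,N}` for `a ∘ σ` is the `τ(j)`-th constraint for `a`, while
`∑ a_i` is unchanged; as `τ` is a bijection the two systems of constraints agree.
-/

theorem nuBit_eq_toNat_testBit (j a : ℕ) : nuBit j a = (a.testBit j).toNat :=
  (Nat.toNat_testBit a j).symm

theorem Nat.sum_two_pow_mul_toNat_eq_ofBits {k : ℕ} (f : Fin k → Bool) :
    ∑ j : Fin k, 2 ^ j.val * (f j).toNat = Nat.ofBits f := by
  induction k with
  | zero => simp
  | succ k ih =>
    rw [Fin.sum_univ_succ, Nat.ofBits_succ, ← ih, Finset.mul_sum]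
    simp only [Fin.val_zero, Fin.val_succ, pow_zero, one_mul, pow_succ', mul_assoc,
      Function.comp_apply]
    exact add_comm _ _

theorem nuBit_ofBits {k : ℕ} (f : Fin k → Bool) (j : Fin k) :
    nuBit j (Nat.ofBits f) = (f j).toNat := by
  rw [nuBit_eq_toNat_testBit, Nat.testBit_ofBits_lt _ _ j.isLt]

theorem two_pow_sub_tauBar {k : ℕ} (τ : Equiv.Perm (Fin k)) (i : ℕ) :
    2 ^ k - tauBar τ i = Nat.ofBits fun j => (2 ^ k - i).testBit (τ j) := by
  have hsum : ∑ j : Fin k, 2 ^ j.val * nuBit (τ j).val (2 ^ k - i)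
      = Nat.ofBits fun j => (2 ^ k - i).testBit (τ j) := by
    simp only [nuBit_eq_toNat_testBit, Nat.sum_two_pow_mul_toNat_eq_ofBits]
  have hlt := Nat.ofBits_lt_two_pow fun j => (2 ^ k - i).testBit (τ j)
  rw [tauBar, hsum]
  omega

theorem nuBit_two_pow_sub_tauBar {k : ℕ} (τ : Equiv.Perm (Fin k)) (i : ℕ) (j : Fin k) :
    nuBit j (2 ^ k - tauBar τ i) = nuBit (τ j) (2 ^ k - i) := by
  rw [two_pow_sub_tauBar, nuBit_ofBits, nuBit_eq_toNat_testBit]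

section Constraints

variable {k : ℕ} {τ : Equiv.Perm (Fin k)} {σ : Equiv.Perm (Fin (2 ^ k))}

theorem sum_comp_mul_nuBit_apply
    (hσ : ∀ x : Fin (2 ^ k), (σ x).val + 1 = tauBar τ (x.val + 1))
    (a : Fin (2 ^ k) → ℕ) (j : Fin k) :
    ∑ x : Fin (2 ^ k), a (σ x) * nuBit (τ j).val (2 ^ k - (x.val + 1))
      = ∑ y : Fin (2 ^ k), a y * nuBit j.val (2 ^ k - (y.val + 1)) := by
  simp only [← nuBit_two_pow_sub_tauBar, ← hσ]
  exact Equiv.sum_comp σ fun y => a y * nuBit j.val (2 ^ k - (y.val + 1))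

theorem memA_comp_iff (n N : ℕ)
    (hσ : ∀ x : Fin (2 ^ k), (σ x).val + 1 = tauBar τ (x.val + 1))
    (a : Fin (2 ^ k) → ℕ) :
    MemA n k N (a ∘ σ) ↔ MemA n k N a := by
  unfold MemA
  refine and_congr ?_ (by rw [Function.comp_def, Equiv.sum_comp σ a])
  rw [← Equiv.forall_congr_right τ]
  simp only [Function.comp_apply, sum_comp_mul_nuBit_apply hσ]

end Constraints

theorem sigma_maps_A_onto_itself_general (n N k : ℕ)
    (τ : Equiv.Perm (Fin k))
    (σ : Equiv.Perm (Fin (2 ^ k)))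
    (hσ : ∀ x : Fin (2 ^ k), (σ x).val + 1 = tauBar τ (x.val + 1)) :
    ∀ a : Fin (2 ^ k) → ℕ, MemA n k N a ↔ MemA n k N (a ∘ ⇑σ) :=
  fun a => (memA_comp_iff n N hσ a).symm

/-- For a `k`-cycle `τ` (`k ≥ 2`) with associated permutation `σ = τ̄` of `{1, …, 2^k}`,
the action of `σ` on `2^k`-tuples by permutation of coordinates maps `A_{n,k,N}`
bijectively onto itself. -/
theorem sigma_maps_A_onto_itself (n N k : ℕ) (hk : 2 ≤ k)
    (τ : Equiv.Perm (Fin k)) (hτ : τ.IsCycle ∧ τ.support.card = k)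
    (σ : Equiv.Perm (Fin (2 ^ k)))
    (hσ : ∀ x : Fin (2 ^ k), (σ x).val + 1 = tauBar τ (x.val + 1)) :
    ∀ a : Fin (2 ^ k) → ℕ, MemA n k N a ↔ MemA n k N (a ∘ ⇑σ) :=
  sigma_maps_A_onto_itself_general n N k τ σ hσ
end
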